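/- Let V_0 = ℚ and let g = { (u, v, w) ∈ ℚ³ : u < v < w and v = (u + w)/2 } and T = { (u, v, w) ∈ ℚ³ : u < v < w }. Then g is a sensitive cut of T: for each coordinate i ∈ {0,1,2}, C_i g = C_i (T \ g) = C_i T, where C_i is the cylindrification on subsets of ℚ³ replacing the i-th coordinate by an arbitrary rational. -/

import Mathlib

def cyl {α U : Type*} [DecidableEq α] (i : α) (X : Set (α → U)) : Set (α → U) :=
  {t | ∃ s ∈ X, ∃ u : U, t = Function.update s i u}

def gSet : Set (Fin 3 → ℚ) :=
  {s | s 0 < s 1 ∧ s 1 < s 2 ∧ s 1 = (s 0 + s 2) / 2}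

def TSet : Set (Fin 3 → ℚ) :=
  {s | s 0 < s 1 ∧ s 1 < s 2}

/-! Since `g ⊆ T` and `T \ g ⊆ T`, it suffices that every `s ∈ T` can be moved into `g`, and also
into `T \ g`, by changing its `i`-th coordinate alone. Into `g`: replace `s i` by the value that
makes `s` an arithmetic progression. Into `T \ g`: move `s i` slightly off that value, staying
inside the order constraints. -/

section Cylindrification

variable {α U : Type*} [DecidableEq α] (i : α)

theorem subset_cyl (X : Set (α → U)) : X ⊆ cyl i X :=
  fun s hs => ⟨s, hs, s i, (Function.update_eq_self i s).symm⟩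

theorem mem_cyl_iff {X : Set (α → U)} {s : α → U} :
    s ∈ cyl i X ↔ ∃ u, Function.update s i u ∈ X := by
  constructor
  · rintro ⟨t, ht, u, rfl⟩
    exact ⟨t i, by simpa using ht⟩
  · rintro ⟨u, hu⟩
    exact ⟨Function.update s i u, hu, s i, by simp⟩

theorem cyl_subset_cyl_of_subset_cyl {X Y : Set (α → U)} (h : X ⊆ cyl i Y) :
    cyl i X ⊆ cyl i Y := by
  rintro _ ⟨s, hs, u, rfl⟩
  obtain ⟨t, ht, v, rfl⟩ := h hs
  exact ⟨t, ht, u, by simp⟩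

theorem cyl_eq_cyl_of_subset_of_subset_cyl {X Y : Set (α → U)} (hXY : X ⊆ Y)
    (hYX : Y ⊆ cyl i X) : cyl i X = cyl i Y :=
  (cyl_subset_cyl_of_subset_cyl i (hXY.trans (subset_cyl i Y))).antisymm
    (cyl_subset_cyl_of_subset_cyl i hYX)

end Cylindrification

theorem gSet_subset_TSet : gSet ⊆ TSet := fun _ hs => ⟨hs.1, hs.2.1⟩

theorem exists_update_mem_gSet {s : Fin 3 → ℚ} (hs : s ∈ TSet) (i : Fin 3) :
    ∃ u, Function.update s i u ∈ gSet := by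
  obtain ⟨h01, h12⟩ := hs
  fin_cases i
  · exact ⟨2 * s 1 - s 2, by simp [gSet, Function.update, Fin.ext_iff]; constructor <;> linarith⟩
  · exact ⟨(s 0 + s 2) / 2, by simp [gSet, Function.update, Fin.ext_iff]; constructor <;> linarith⟩
  · exact ⟨2 * s 1 - s 0, by simp [gSet, Function.update, Fin.ext_iff]; constructor <;> linarith⟩

theorem exists_update_mem_TSet_diff_gSet {s : Fin 3 → ℚ} (hs : s ∈ TSet) (i : Fin 3) :
    ∃ u, Function.update s i u ∈ TSet \ gSet := by
  obtain ⟨h01, h12⟩ := hs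
  fin_cases i
  · refine ⟨2 * s 1 - s 2 - 1, ⟨?_, ?_⟩, fun hg => ?_⟩ <;>
      simp [gSet, Function.update, Fin.ext_iff] at * <;> linarith
  · refine ⟨(3 * s 0 + s 2) / 4, ⟨?_, ?_⟩, fun hg => ?_⟩ <;>
      simp [gSet, Function.update, Fin.ext_iff] at * <;> linarith
  · refine ⟨2 * s 1 - s 0 + 1, ⟨?_, ?_⟩, fun hg => ?_⟩ <;>
      simp [gSet, Function.update, Fin.ext_iff] at * <;> linarith

theorem stmt_13 :
    ∀ i : Fin 3, cyl i gSet = cyl i (TSet \ gSet) ∧ cyl i gSet = cyl i TSet := by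
  intro i
  have hg : cyl i gSet = cyl i TSet :=
    cyl_eq_cyl_of_subset_of_subset_cyl i gSet_subset_TSet fun _ hs =>
      (mem_cyl_iff i).2 (exists_update_mem_gSet hs i)
  have hTg : cyl i (TSet \ gSet) = cyl i TSet :=
    cyl_eq_cyl_of_subset_of_subset_cyl i Set.sdiff_subset fun _ hs =>
      (mem_cyl_iff i).2 (exists_update_mem_TSet_diff_gSet hs i)
  exact ⟨hg.trans hTg.symm, hg⟩
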